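/- arXiv:1403.1641 — 2 statements merged into one kernel-verified Lean document; each statement's English description precedes it below -/
import Mathlib

section
/- Let G be a Lie group with a left Haar measure that is also right-invariant (unimodular), let f₁ be a smooth function on G such that f₁ and all its left-invariant derivatives decay faster than e^{-κ|g|} for every κ ≥ 0 (with respect to a left-invariant Riemannian distance |g| = d(g,e)), and let f₂ ∈ C^∞(G) be such that f₂ and all its left-invariant derivatives are of moderate growth, i.e., bounded by C e^{κ|g|} for some κ. Then for any X in the Lie algebra of G, ∫_G f₁(g) (dL(X) f₂)(g) dg = -∫_G (dL(X) f₁)(g) f₂(g) dg, where dL(X)f(g) = d/dε f(exp(-εX) g)|_{ε=0}. -/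
/-!
Translating `f₂` by `φ (-x)` inside the integral is the same, by left invariance of `μ`, as
translating `f₁` by `φ x`; differentiating both sides at `x = 0` under the integral sign gives the
identity. Dominated differentiation works as soon as `φ` is bounded near `0`: then a translate of
the weight `exp (κ |g|)` is at most a constant multiple of it. If instead `φ` is unbounded on every
neighbourhood of `0`, then every `g` is a limit of points `φ (-ε) g` escaping to infinity, so
continuity of `f₁` along `φ` together with its decay forces `f₁ = 0`.
-/

open MeasureTheory Filter Metric Bornology Topology Set

section LeftInvariantMetric

variable {G : Type*} [Group G] [PseudoMetricSpace G] [IsIsometricSMul G G]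

theorem abs_dist_mul_one_sub_dist_le (a g : G) : |dist (a * g) 1 - dist g 1| ≤ dist a 1 := by
  have h₁ : dist (a * g) 1 = dist a⁻¹ g := by
    rw [← dist_mul_left a⁻¹, inv_mul_cancel_left, mul_one, dist_comm]
  have h₂ : dist a⁻¹ 1 = dist a 1 := by
    rw [← dist_mul_left a, mul_inv_cancel, mul_one, dist_comm]
  rw [h₁, dist_comm g, ← h₂]
  exact abs_dist_sub_le _ _ _

theorem exp_mul_dist_mul_one_le (β : ℝ) (a g : G) :
    Real.exp (β * dist (a * g) 1) ≤ Real.exp (|β| * dist a 1) * Real.exp (β * dist g 1) := by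
  rw [← Real.exp_add, Real.exp_le_exp]
  have := calc β * (dist (a * g) 1 - dist g 1)
      ≤ |β| * |dist (a * g) 1 - dist g 1| := by rw [← abs_mul]; exact le_abs_self _
    _ ≤ |β| * dist a 1 := by gcongr; exact abs_dist_mul_one_sub_dist_le a g
  linarith

theorem Bornology.IsBounded.image_mul_const {s : Set G} (hs : IsBounded s) (g : G) :
    IsBounded ((· * g) '' s) := by
  obtain ⟨r, hr⟩ := (isBounded_iff_subset_closedBall 1).1 hs
  refine (isBounded_iff_subset_closedBall 1).2 ⟨r + dist g 1, ?_⟩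
  rintro _ ⟨a, ha, rfl⟩
  have ha' := mem_closedBall.1 (hr ha)
  have := (abs_le.1 (abs_dist_mul_one_sub_dist_le a g)).2
  rw [mem_closedBall]
  linarith

end LeftInvariantMetric

section OneParameterSubgroup

variable {A G : Type*} [AddGroup A] [Group G] {φ : A → G}

theorem map_zero_of_map_add (hφ : ∀ s t, φ (s + t) = φ s * φ t) : φ 0 = 1 :=
  mul_eq_left.1 (by rw [← hφ, add_zero] : φ 0 * φ 0 = φ 0)

theorem map_neg_mul_map_mul (hφ : ∀ s t, φ (s + t) = φ s * φ t) (t : A) (g : G) :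
    φ (-t) * (φ t * g) = g := by
  rw [← mul_assoc, ← hφ, neg_add_cancel, map_zero_of_map_add hφ, one_mul]

end OneParameterSubgroup

theorem exists_nhds_zero_isBounded_image_comp_neg {A Y : Type*} [AddGroup A] [TopologicalSpace A]
    [IsTopologicalAddGroup A] [Bornology Y] {φ : A → Y} (h : ∃ U ∈ 𝓝 (0 : A), IsBounded (φ '' U)) :
    ∃ U ∈ 𝓝 (0 : A), IsBounded ((fun t => φ (-t)) '' U) := by
  obtain ⟨U, hU, hφU⟩ := h
  refine ⟨-U, neg_mem_nhds_zero A hU, hφU.subset ?_⟩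
  rintro _ ⟨x, hx, rfl⟩
  exact ⟨-x, hx, rfl⟩

/-- The derivative `dL(X) f` of the paper, for `φ t = exp (t X)`. -/
noncomputable def leftDeriv {G E : Type*} [Mul G] [NormedAddCommGroup E] [NormedSpace ℝ E]
    (φ : ℝ → G) (f : G → E) (g : G) : E :=
  deriv (fun ε : ℝ => f (φ (-ε) * g)) 0

section LeftDeriv

variable {G E : Type*} [Group G] [NormedAddCommGroup E] [NormedSpace ℝ E] {φ : ℝ → G} {f : G → E}

theorem hasDerivAt_leftTranslate (hφ : ∀ s t, φ (s + t) = φ s * φ t)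
    (hf : ∀ g, DifferentiableAt ℝ (fun ε : ℝ => f (φ (-ε) * g)) 0) (g : G) (x₀ : ℝ) :
    HasDerivAt (fun x : ℝ => f (φ (-x) * g)) (leftDeriv φ f (φ (-x₀) * g)) x₀ := by
  have h : HasDerivAt (fun ε : ℝ => f (φ (-ε) * (φ (-x₀) * g)))
      (leftDeriv φ f (φ (-x₀) * g)) (x₀ - x₀) := by
    rw [sub_self]; exact (hf _).hasDerivAt
  convert h.comp_sub_const x₀ x₀ using 1
  funext x
  rw [← mul_assoc, ← hφ]
  congr 3
  ring

theorem leftDeriv_comp_neg (φ : ℝ → G) (f : G → E) (g : G) :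
    leftDeriv (fun t => φ (-t)) f g = -leftDeriv φ f g := by
  simpa [leftDeriv] using deriv_comp_neg (f := fun ε : ℝ => f (φ (-ε) * g)) (x := 0)

theorem stronglyMeasurable_leftDeriv [TopologicalSpace G] [ContinuousMul G] [MeasurableSpace G]
    [OpensMeasurableSpace G] [SecondCountableTopology E] (hc : Continuous f)
    (hd : ∀ g, DifferentiableAt ℝ (fun ε : ℝ => f (φ (-ε) * g)) 0) :
    StronglyMeasurable (leftDeriv φ f) := by
  refine stronglyMeasurable_of_tendsto (𝓝[≠] (0 : ℝ))
    (f := fun t g => slope (fun ε : ℝ => f (φ (-ε) * g)) 0 t) (fun t => ?_)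
    (tendsto_pi_nhds.2 fun g => hasDerivAt_iff_tendsto_slope.1 (hd g).hasDerivAt)
  simp only [slope_def_module]
  exact (((hc.comp (continuous_const_mul _)).sub
    (hc.comp (continuous_const_mul _))).const_smul _).stronglyMeasurable

end LeftDeriv

section Integration

variable {G 𝕜 : Type*} [Group G] [PseudoMetricSpace G] [MeasurableSpace G] [OpensMeasurableSpace G]
  [RCLike 𝕜] {μ : Measure G} {a b : G → 𝕜} {c α β A A' : ℝ}

theorem integrable_mul_of_norm_le_exp (hint : Integrable (fun g => Real.exp (-c * dist g 1)) μ)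
    (ha : Continuous a) (hb : Continuous b) (hαβ : α + β = -c)
    (ha_le : ∀ g, ‖a g‖ ≤ A * Real.exp (α * dist g 1))
    (hb_le : ∀ g, ‖b g‖ ≤ A' * Real.exp (β * dist g 1)) :
    Integrable (fun g => a g * b g) μ := by
  refine (hint.const_mul (A * A')).mono' (ha.mul hb).aestronglyMeasurable
    (ae_of_all _ fun g => ?_)
  calc ‖a g * b g‖ = ‖a g‖ * ‖b g‖ := norm_mul _ _
    _ ≤ (A * Real.exp (α * dist g 1)) * (A' * Real.exp (β * dist g 1)) :=
        mul_le_mul (ha_le g) (hb_le g) (norm_nonneg _) ((norm_nonneg _).trans (ha_le g))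
    _ = A * A' * Real.exp (-c * dist g 1) := by
        rw [← hαβ, add_mul, Real.exp_add]; ring

theorem hasDerivAt_integral_mul_leftTranslate [IsIsometricSMul G G] [ContinuousMul G]
    {φ : ℝ → G} (hφ : ∀ s t, φ (s + t) = φ s * φ t) (hφ_bdd : ∃ U ∈ 𝓝 (0 : ℝ), IsBounded (φ '' U))
    (ha : Continuous a) (hb : Continuous b)
    (hbd : ∀ g, DifferentiableAt ℝ (fun ε : ℝ => b (φ (-ε) * g)) 0)
    (hab : Integrable (fun g => a g * b g) μ)
    (hint : Integrable (fun g => Real.exp (-c * dist g 1)) μ) (hαβ : α + β = -c)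
    (ha_le : ∀ g, ‖a g‖ ≤ A * Real.exp (α * dist g 1))
    (hDb_le : ∀ g, ‖leftDeriv φ b g‖ ≤ A' * Real.exp (β * dist g 1)) :
    HasDerivAt (fun x : ℝ => ∫ g, a g * b (φ (-x) * g) ∂μ) (∫ g, a g * leftDeriv φ b g ∂μ) 0 := by
  obtain ⟨U, hU, hU_bdd⟩ := exists_nhds_zero_isBounded_image_comp_neg hφ_bdd
  obtain ⟨r, hr⟩ := (isBounded_iff_subset_closedBall 1).1 hU_bdd
  have hφ0 := map_zero_of_map_add hφ
  have hA' : 0 ≤ A' := (norm_nonneg _).trans ((hDb_le 1).trans_eq (by simp))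
  have h_bound (g : G) (x : ℝ) (hx : x ∈ U) : ‖a g * leftDeriv φ b (φ (-x) * g)‖
      ≤ A * A' * Real.exp (|β| * r) * Real.exp (-c * dist g 1) := by
    have hφx : dist (φ (-x)) 1 ≤ r := mem_closedBall.1 (hr ⟨x, hx, rfl⟩)
    have hDb : ‖leftDeriv φ b (φ (-x) * g)‖
        ≤ A' * (Real.exp (|β| * r) * Real.exp (β * dist g 1)) :=
      (hDb_le _).trans <| mul_le_mul_of_nonneg_left
        ((exp_mul_dist_mul_one_le β _ g).trans (by gcongr)) hA'
    calc ‖a g * leftDeriv φ b (φ (-x) * g)‖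
        = ‖a g‖ * ‖leftDeriv φ b (φ (-x) * g)‖ := norm_mul _ _
      _ ≤ (A * Real.exp (α * dist g 1))
            * (A' * (Real.exp (|β| * r) * Real.exp (β * dist g 1))) :=
        mul_le_mul (ha_le g) hDb (norm_nonneg _) ((norm_nonneg _).trans (ha_le g))
      _ = A * A' * Real.exp (|β| * r) * Real.exp (-c * dist g 1) := by
        rw [← hαβ, add_mul, Real.exp_add]; ring
  have hF'_meas : AEStronglyMeasurable (fun g => a g * leftDeriv φ b g) μ :=
    ha.aestronglyMeasurable.mul (stronglyMeasurable_leftDeriv hb hbd).aestronglyMeasurable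
  have key := hasDerivAt_integral_of_dominated_loc_of_deriv_le (μ := μ) (x₀ := 0)
    (F := fun x g => a g * b (φ (-x) * g)) (F' := fun x g => a g * leftDeriv φ b (φ (-x) * g))
    hU (Eventually.of_forall fun x =>
      (ha.mul (hb.comp (continuous_const_mul _))).aestronglyMeasurable)
    (by simpa [hφ0] using hab) (by simpa [hφ0] using hF'_meas)
    (ae_of_all _ fun g x hx => h_bound g x hx) (hint.const_mul _)
    (ae_of_all _ fun g x _ => (hasDerivAt_leftTranslate hφ hbd g x).const_mul (a g))
  simpa [hφ0] using key.2

end Integration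

theorem integral_mul_leftTranslate {G 𝕜 : Type*} [Group G] [MeasurableSpace G] [MeasurableMul G]
    [RCLike 𝕜] {μ : Measure G} [μ.IsMulLeftInvariant] {φ : ℝ → G}
    (hφ : ∀ s t, φ (s + t) = φ s * φ t) (a b : G → 𝕜) (x : ℝ) :
    ∫ g, a g * b (φ (-x) * g) ∂μ = ∫ g, b g * a (φ (-(-x)) * g) ∂μ := by
  rw [← integral_mul_left_eq_self _ (φ x)]
  simp only [map_neg_mul_map_mul hφ, neg_neg, mul_comm]

theorem eq_of_continuousAt_of_tendsto_cobounded {X Y Z : Type*} [TopologicalSpace X] [Bornology Y]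
    [TopologicalSpace Z] [T2Space Z] {v : X → Y} {f : Y → Z} {x₀ : X} {z : Z}
    (hv : ∀ U ∈ 𝓝 x₀, ¬IsBounded (v '' U)) (hf : Tendsto f (cobounded Y) (𝓝 z))
    (hfv : ContinuousAt (f ∘ v) x₀) : f (v x₀) = z := by
  have : NeBot (𝓝 x₀ ⊓ comap v (cobounded Y)) := by
    refine inf_neBot_iff.2 fun U hU s hs => ?_
    obtain ⟨t, ht, hts⟩ := mem_comap.1 hs
    by_contra hUs
    refine hv U hU ((isBounded_def.2 (by rwa [compl_compl])).subset ?_)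
    rintro _ ⟨x, hxU, rfl⟩ hxt
    exact hUs ⟨x, hxU, hts hxt⟩
  exact tendsto_nhds_unique (hfv.tendsto.mono_left inf_le_left)
    ((hf.comp tendsto_comap).mono_left inf_le_right)

theorem tendsto_cobounded_of_norm_le_exp {X E : Type*} [PseudoMetricSpace X]
    [SeminormedAddCommGroup E] {f : X → E} {x₀ : X} {C κ : ℝ} (hκ : 0 < κ)
    (hf : ∀ x, ‖f x‖ ≤ C * Real.exp (-κ * dist x x₀)) : Tendsto f (cobounded X) (𝓝 0) := by
  refine squeeze_zero_norm hf ?_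
  simpa [neg_mul] using ((Real.tendsto_exp_neg_atTop_nhds_zero.comp
    ((tendsto_dist_right_cobounded_atTop x₀).const_mul_atTop hκ)).const_mul C)

theorem not_isBounded_image_leftTranslate {G : Type*} [Group G] [PseudoMetricSpace G]
    [IsIsometricSMul G G] {φ : ℝ → G} (hφ : ¬∃ U ∈ 𝓝 (0 : ℝ), IsBounded (φ '' U)) (g : G) :
    ∀ U ∈ 𝓝 (0 : ℝ), ¬IsBounded ((fun ε : ℝ => φ (-ε) * g) '' U) := by
  intro U hU hbdd
  have hneg : IsBounded ((fun ε : ℝ => φ (-ε)) '' U) :=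
    (hbdd.image_mul_const g⁻¹).subset <| by
      rintro _ ⟨x, hx, rfl⟩; exact ⟨_, ⟨x, hx, rfl⟩, mul_inv_cancel_right _ _⟩
  exact hφ (by simpa using exists_nhds_zero_isBounded_image_comp_neg ⟨U, hU, hneg⟩)

theorem stmt3_general {G : Type*} [Group G] [MetricSpace G] [IsTopologicalGroup G]
    [MeasurableSpace G] [BorelSpace G]
    (μ : Measure G) [μ.IsHaarMeasure]
    (hleft : ∀ h g₁ g₂ : G, dist (h * g₁) (h * g₂) = dist g₁ g₂)
    (hint : ∃ c > 0, Integrable (fun g => Real.exp (-c * dist g 1)) μ)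
    (φ : ℝ → G) (hφ : ∀ s t : ℝ, φ (s + t) = φ s * φ t)
    (f₁ f₂ : G → ℂ) (hf₁c : Continuous f₁) (hf₂c : Continuous f₂)
    -- smoothness of f₁, f₂ along the one-parameter subgroup:
    (hf₁d : ∀ g : G, DifferentiableAt ℝ (fun ε : ℝ => f₁ (φ (-ε) * g)) 0)
    (hf₂d : ∀ g : G, DifferentiableAt ℝ (fun ε : ℝ => f₂ (φ (-ε) * g)) 0)
    -- rapid decay of f₁ and of all its left-invariant derivatives:
    (hf₁dec : ∀ κ : ℝ, 0 ≤ κ → ∃ C : ℝ, ∀ g : G,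
      ‖f₁ g‖ ≤ C * Real.exp (-κ * dist g 1))
    (hdf₁dec : ∀ ψ : ℝ → G, (∀ s t : ℝ, ψ (s + t) = ψ s * ψ t) →
      ∀ κ : ℝ, 0 ≤ κ → ∃ C : ℝ, ∀ g : G,
        ‖deriv (fun ε : ℝ => f₁ (ψ (-ε) * g)) 0‖ ≤ C * Real.exp (-κ * dist g 1))
    -- moderate growth of f₂ and of all its left-invariant derivatives:
    (hf₂mod : ∃ C κ : ℝ, 0 < C ∧ 0 < κ ∧ ∀ g : G,
      ‖f₂ g‖ ≤ C * Real.exp (κ * dist g 1))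
    (hdf₂mod : ∀ ψ : ℝ → G, (∀ s t : ℝ, ψ (s + t) = ψ s * ψ t) →
      ∃ C κ : ℝ, 0 < C ∧ 0 < κ ∧ ∀ g : G,
        ‖deriv (fun ε : ℝ => f₂ (ψ (-ε) * g)) 0‖ ≤ C * Real.exp (κ * dist g 1)) :
    ∫ g, f₁ g * deriv (fun ε : ℝ => f₂ (φ (-ε) * g)) 0 ∂μ
      = - ∫ g, deriv (fun ε : ℝ => f₁ (φ (-ε) * g)) 0 * f₂ g ∂μ := by
  show ∫ g, f₁ g * leftDeriv φ f₂ g ∂μ = -∫ g, leftDeriv φ f₁ g * f₂ g ∂μ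
  have : IsIsometricSMul G G := ⟨fun h => Isometry.of_dist_eq (hleft h)⟩
  have hψ : ∀ s t : ℝ, φ (-(s + t)) = φ (-s) * φ (-t) := fun s t => by rw [neg_add, hφ]
  by_cases hloc : ∃ U ∈ 𝓝 (0 : ℝ), IsBounded (φ '' U)
  · obtain ⟨c, hc, hcint⟩ := hint
    obtain ⟨C₂, κ₂, -, hκ₂, hDf₂⟩ := hdf₂mod φ hφ
    obtain ⟨C₂', κ₂', -, hκ₂', hf₂⟩ := hf₂mod
    obtain ⟨C₁, hf₁⟩ := hf₁dec (κ₂ + c) (by positivity)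
    obtain ⟨C₁', hf₁'⟩ := hf₁dec (κ₂' + c) (by positivity)
    obtain ⟨C₁'', hDf₁⟩ := hdf₁dec (fun t => φ (-t)) hψ (κ₂' + c) (by positivity)
    have hf₁d' (g : G) : DifferentiableAt ℝ (fun ε : ℝ => f₁ (φ (-(-ε)) * g)) 0 :=
      differentiableAt_comp_neg (f := fun ε : ℝ => f₁ (φ (-ε) * g)).2
        (by rw [neg_zero]; exact hf₁d g)
    have h₁₂ : Integrable (fun g => f₁ g * f₂ g) μ :=
      integrable_mul_of_norm_le_exp hcint hf₁c hf₂c (by ring) hf₁' hf₂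
    have hJ := hasDerivAt_integral_mul_leftTranslate hφ hloc hf₁c hf₂c hf₂d h₁₂ hcint (by ring)
      hf₁ hDf₂
    have hI := hasDerivAt_integral_mul_leftTranslate hψ
      (exists_nhds_zero_isBounded_image_comp_neg hloc) hf₂c hf₁c hf₁d'
      (by simpa only [mul_comm] using h₁₂) hcint (by ring) hf₂ hDf₁
    simp only [integral_mul_leftTranslate hφ f₁ f₂] at hJ
    rw [hJ.unique hI, ← integral_neg]
    simp only [leftDeriv_comp_neg, mul_neg, mul_comm]
  · have hf₁ : f₁ = 0 := funext fun g => by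
      simpa [map_zero_of_map_add hφ] using eq_of_continuousAt_of_tendsto_cobounded
        (not_isBounded_image_leftTranslate hloc g)
        (tendsto_cobounded_of_norm_le_exp one_pos (hf₁dec 1 zero_le_one).choose_spec)
        (hf₁d g).continuousAt
    subst hf₁
    simp [leftDeriv]

/-- integration by parts on a unimodular group: Let `G` be a unimodular
(Lie) group with bi-invariant Haar measure `μ` and a left-invariant metric, `|g| = dist g 1`.
The left-invariant derivative along a one-parameter subgroup `φ` is
`dL f g = d/dε f(φ(-ε) g)|₀`. If `f₁` and all its left-invariant derivatives are rapidly
decreasing, and `f₂` with all its left-invariant derivatives is of moderate growth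
(and both are smooth along the relevant directions), then
`∫ f₁ (dL f₂) dμ = - ∫ (dL f₁) f₂ dμ`. -/
theorem stmt3 {G : Type*} [Group G] [MetricSpace G] [IsTopologicalGroup G]
    [MeasurableSpace G] [BorelSpace G] [LocallyCompactSpace G]
    (μ : Measure G) [μ.IsHaarMeasure] [μ.IsMulRightInvariant]
    (hleft : ∀ h g₁ g₂ : G, dist (h * g₁) (h * g₂) = dist g₁ g₂)
    (hint : ∃ c > 0, Integrable (fun g => Real.exp (-c * dist g 1)) μ)
    (φ : ℝ → G) (hφ : ∀ s t : ℝ, φ (s + t) = φ s * φ t)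
    (f₁ f₂ : G → ℂ) (hf₁c : Continuous f₁) (hf₂c : Continuous f₂)
    -- smoothness of f₁, f₂ along the one-parameter subgroup:
    (hf₁d : ∀ g : G, DifferentiableAt ℝ (fun ε : ℝ => f₁ (φ (-ε) * g)) 0)
    (hf₂d : ∀ g : G, DifferentiableAt ℝ (fun ε : ℝ => f₂ (φ (-ε) * g)) 0)
    -- rapid decay of f₁ and of all its left-invariant derivatives:
    (hf₁dec : ∀ κ : ℝ, 0 ≤ κ → ∃ C : ℝ, ∀ g : G,
      ‖f₁ g‖ ≤ C * Real.exp (-κ * dist g 1))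
    (hdf₁dec : ∀ ψ : ℝ → G, (∀ s t : ℝ, ψ (s + t) = ψ s * ψ t) →
      ∀ κ : ℝ, 0 ≤ κ → ∃ C : ℝ, ∀ g : G,
        ‖deriv (fun ε : ℝ => f₁ (ψ (-ε) * g)) 0‖ ≤ C * Real.exp (-κ * dist g 1))
    -- moderate growth of f₂ and of all its left-invariant derivatives:
    (hf₂mod : ∃ C κ : ℝ, 0 < C ∧ 0 < κ ∧ ∀ g : G,
      ‖f₂ g‖ ≤ C * Real.exp (κ * dist g 1))
    (hdf₂mod : ∀ ψ : ℝ → G, (∀ s t : ℝ, ψ (s + t) = ψ s * ψ t) →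
      ∃ C κ : ℝ, 0 < C ∧ 0 < κ ∧ ∀ g : G,
        ‖deriv (fun ε : ℝ => f₂ (ψ (-ε) * g)) 0‖ ≤ C * Real.exp (κ * dist g 1)) :
    ∫ g, f₁ g * deriv (fun ε : ℝ => f₂ (φ (-ε) * g)) 0 ∂μ
      = - ∫ g, deriv (fun ε : ℝ => f₁ (φ (-ε) * g)) 0 * f₂ g ∂μ :=
  stmt3_general μ hleft hint φ hφ f₁ f₂ hf₁c hf₂c hf₁d hf₂d hf₁dec hdf₁dec hf₂mod hdf₂mod
end

section
/- Let a Lie group G act smoothly on a compact smooth manifold X, and write Φ_g(x) = g⁻¹ · x. Then the set G(X) = {g ∈ G : Φ_g is transversal} (all fixed points of Φ_g are simple) is open in G. -/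
/-!
The set of pairs `(g, x)` such that `x` is a fixed point of `Φ_g` at which `1 - dΦ_g(x)` is not
invertible is closed in `G × X`. Away from the fixed points this is Hausdorffness of `X`. Near a
fixed point `(g₀, x₀)`, the differential of `Φ_g` at `x`, written in the chart at `x₀`, depends
continuously on `(g, x)`, and invertibility of `1 - A` is an open condition (the model space is
finite-dimensional because `X` is compact). Since `X` is compact, the projection `G × X → G` is a
closed map, and `G(X)` is the complement of the projection of that closed set.
-/

open Set Function Filter Topology Manifold

theorem isOpen_setOf_forall_mem_of_compactSpace {X Y : Type*} [TopologicalSpace X]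
    [TopologicalSpace Y] [CompactSpace Y] {U : Set (X × Y)} (hU : IsOpen U) :
    IsOpen {x | ∀ y, (x, y) ∈ U} := by
  have : {x | ∀ y, (x, y) ∈ U} = (Prod.fst '' Uᶜ)ᶜ := by
    ext x; simp
  rw [this]
  exact (isClosedMap_fst_of_compactSpace _ hU.isClosed_compl).isOpen_compl

section

variable {𝕜 : Type*} [NontriviallyNormedField 𝕜]
  {E : Type*} [NormedAddCommGroup E] [NormedSpace 𝕜 E] {H : Type*} [TopologicalSpace H]
  {I : ModelWithCorners 𝕜 E H} {M : Type*} [TopologicalSpace M] [ChartedSpace H M]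
  {F : Type*} [NormedAddCommGroup F] [NormedSpace 𝕜 F] {H' : Type*} [TopologicalSpace H']
  {J : ModelWithCorners 𝕜 F H'} {X : Type*} [TopologicalSpace X] [ChartedSpace H' X]

variable (J) in
/-- A fixed point `x` of `f` is simple (`det (1 - dfₓ) ≠ 0`) exactly when this holds. -/
def IsNondegenerateAt (f : X → X) (x : X) : Prop :=
  ∃ A : F →L[𝕜] F, HasMFDerivAt J J f x A ∧ IsUnit (1 - A)

theorem HasMFDerivAt.isNondegenerateAt_iff {f : X → X} {x : X} {A : F →L[𝕜] F}
    (hA : HasMFDerivAt J J f x A) : IsNondegenerateAt J f x ↔ IsUnit (1 - A) :=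
  ⟨fun ⟨_, hB, hB1⟩ => hasMFDerivAt_unique hB hA ▸ hB1, fun h => ⟨A, hA, h⟩⟩

variable [IsManifold J 1 X]

theorem tangentCoordChange_mul_tangentCoordChange {x y z : X}
    (hx : z ∈ (chartAt H' x).source) (hy : z ∈ (chartAt H' y).source) :
    tangentCoordChange J x y z * tangentCoordChange J y x z = 1 := by
  ext v
  exact (tangentCoordChange_comp (by simp_all)).trans (tangentCoordChange_self (by simpa))

theorem isUnit_one_sub_tangentCoordChange_conj_iff {x₀ x : X} (hx : x ∈ (chartAt H' x₀).source)
    (L : F →L[𝕜] F) :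
    IsUnit (1 - tangentCoordChange J x x₀ x ∘L L ∘L tangentCoordChange J x₀ x x) ↔
      IsUnit (1 - L) := by
  let u : (F →L[𝕜] F)ˣ :=
    ⟨tangentCoordChange J x x₀ x, tangentCoordChange J x₀ x x,
      tangentCoordChange_mul_tangentCoordChange (mem_chart_source H' x) hx,
      tangentCoordChange_mul_tangentCoordChange hx (mem_chart_source H' x)⟩
  have : 1 - tangentCoordChange J x x₀ x ∘L L ∘L tangentCoordChange J x₀ x x
      = u * (1 - L) * ↑u⁻¹ := by
    rw [mul_sub, sub_mul, mul_one, Units.mul_inv]; rfl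
  rw [this, Units.isUnit_mul_units, Units.isUnit_units_mul]

variable [IsManifold I 1 M] {f : M → X → X}

theorem eventually_isFixedPt_imp_isNondegenerateAt [CompleteSpace F]
    (hf : ContMDiff (I.prod J) J 1 (uncurry f)) {p₀ : M} {x₀ : X} (hfix : IsFixedPt (f p₀) x₀)
    (hnd : IsNondegenerateAt J (f p₀) x₀) :
    ∀ᶠ q in 𝓝 (p₀, x₀), IsFixedPt (f q.1) q.2 → IsNondegenerateAt J (f q.1) q.2 := by
  set D : M × X → F →L[𝕜] F :=
    inTangentCoordinates J J Prod.snd (fun q => f q.1 q.2)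
      (fun q => mfderiv J J (f q.1) q.2) (p₀, x₀)
  have hD : ContinuousAt D (p₀, x₀) := by
    have hf' : ContMDiff ((I.prod J).prod J) J 1 (fun q : (M × X) × X => f q.1.1 q.2) :=
      hf.comp ((contMDiff_fst.comp contMDiff_fst).prodMk contMDiff_snd)
    exact (ContMDiffAt.mfderiv (fun (q : M × X) y => f q.1 y) Prod.snd
      (hf'.contMDiffAt (x := ((p₀, x₀), x₀))) contMDiffAt_snd (m := 0) (n := 1) le_rfl).continuousAt
  have hsrc : ∀ᶠ q in 𝓝 (p₀, x₀), q.2 ∈ (chartAt H' x₀).source :=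
    continuousAt_snd.preimage_mem_nhds ((chartAt H' x₀).open_source.mem_nhds
      (mem_chart_source H' x₀))
  -- in the chart at `x₀`, the derivative at a fixed point `x` is conjugate to `D (p, x)`
  have hconj : ∀ q : M × X, q.2 ∈ (chartAt H' x₀).source → IsFixedPt (f q.1) q.2 →
      (IsUnit (1 - D q) ↔ IsNondegenerateAt J (f q.1) q.2) := by
    rintro ⟨p, x⟩ hx hpx
    set L : F →L[𝕜] F := mfderiv J J (f p) x
    have hL : HasMFDerivAt J J (f p) x L :=
      ((hf.comp ((contMDiff_const (c := p)).prodMk contMDiff_id)).mdifferentiableAt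
        one_ne_zero).hasMFDerivAt
    have : D (p, x) = tangentCoordChange J x x₀ x ∘L L ∘L
        tangentCoordChange J x₀ x x := by
      refine (inTangentCoordinates_eq _ _ _ hx ?_).trans ?_
      · simpa [hfix.eq, hpx.eq] using hx
      · simp only [hfix.eq, hpx.eq]; rfl
    rw [hL.isNondegenerateAt_iff, this, isUnit_one_sub_tangentCoordChange_conj_iff hx]
  have hD₀ : IsUnit (1 - D (p₀, x₀)) :=
    (hconj _ (mem_chart_source H' x₀) hfix).2 hnd
  filter_upwards [hsrc, (continuousAt_const.sub hD).preimage_mem_nhds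
    (Units.isOpen.mem_nhds hD₀)] with q hq hqD hqfix
  exact (hconj q hq hqfix).1 hqD

theorem isOpen_setOf_isFixedPt_imp_isNondegenerateAt [T2Space X] [CompleteSpace F]
    (hf : ContMDiff (I.prod J) J 1 (uncurry f)) :
    IsOpen {q : M × X | IsFixedPt (f q.1) q.2 → IsNondegenerateAt J (f q.1) q.2} := by
  refine isOpen_iff_mem_nhds.2 fun ⟨p₀, x₀⟩ hq => ?_
  by_cases hfix : IsFixedPt (f p₀) x₀
  · exact eventually_isFixedPt_imp_isNondegenerateAt hf hfix (hq hfix)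
  · filter_upwards [(isOpen_ne_fun hf.continuous continuous_snd).mem_nhds hfix]
      with q hq hqfix using absurd hqfix hq

end

/-- For a smooth action of a Lie group `G` on a compact manifold `X`
(with `Φ_g(x) = g⁻¹ • x`), the set of transversally acting elements
`G(X) = {g : all fixed points of Φ_g are simple}` is open in `G`. -/
theorem stmt9 {E : Type*} [NormedAddCommGroup E] [NormedSpace ℝ E]
    {H : Type*} [TopologicalSpace H] (I : ModelWithCorners ℝ E H)
    {F : Type*} [NormedAddCommGroup F] [NormedSpace ℝ F]
    {H' : Type*} [TopologicalSpace H'] (J : ModelWithCorners ℝ F H')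
    {G : Type*} [TopologicalSpace G] [ChartedSpace H G] [Group G] [LieGroup I (⊤ : ℕ∞) G]
    {X : Type*} [TopologicalSpace X] [ChartedSpace H' X] [IsManifold J (⊤ : ℕ∞) X]
    [CompactSpace X] [T2Space X]
    [MulAction G X]
    (hsmooth : ContMDiff (I.prod J) J (⊤ : ℕ∞) (fun p : G × X => p.1⁻¹ • p.2)) :
    IsOpen {g : G | ∀ x : X, g⁻¹ • x = x →
      ∃ A : F →L[ℝ] F, HasMFDerivAt J J (fun y : X => g⁻¹ • y) x A ∧
        IsUnit ((1 : F →L[ℝ] F) - A)} := by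
  rcases isEmpty_or_nonempty X with _ | _
  · simp
  have : FiniteDimensional ℝ F := .of_locallyCompact_manifold X J
  exact isOpen_setOf_forall_mem_of_compactSpace
    (isOpen_setOf_isFixedPt_imp_isNondegenerateAt (f := fun g y => g⁻¹ • y)
      (hsmooth.of_le (by simp)))
end
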